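/- If Q and Q′ are two BZ triangles with ∂(Q) = ∂(Q′), then Q′ − Q = ℓ·v for some integer ℓ; i.e., all BZ triangles with a fixed boundary are related to each other by adding or subtracting integer multiples of v. -/

import Mathlib

/-- The hexagon relations on a point of `ℤ⁹` with coordinates
`(a₁,b₁,c₁,a₂,a₃,b₂,b₃,c₂,c₃)` (indices `0,…,8`). -/
def hex (x : Fin 9 → ℤ) : Prop :=
  x 3 + x 4 = x 6 + x 7 ∧ x 5 + x 6 = x 8 + x 3 ∧ x 7 + x 8 = x 4 + x 5

/-- A BZ triangle: a point of `ℕ⁹` (all entries nonnegative) satisfying the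
hexagon relations. -/
def isBZ (x : Fin 9 → ℤ) : Prop := (∀ i, 0 ≤ x i) ∧ hex x

/-- The boundary map `∂ : ℤ⁹ → (ℤ²)³`. -/
def bd (x : Fin 9 → ℤ) : Fin 3 → ℤ × ℤ :=
  ![(x 0 + x 3, x 4 + x 1), (x 1 + x 5, x 6 + x 2), (x 2 + x 7, x 8 + x 0)]

/-- The vector `v` with all corner entries `1` and all hexagon entries `-1`. -/
def vtri : Fin 9 → ℤ := ![1, 1, 1, -1, -1, -1, -1, -1, -1]

theorem hex_sub {x y : Fin 9 → ℤ} (hx : hex x) (hy : hex y) : hex (x - y) := by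
  obtain ⟨hx₁, hx₂, hx₃⟩ := hx
  obtain ⟨hy₁, hy₂, hy₃⟩ := hy
  simp only [hex, Pi.sub_apply]
  omega

theorem bd_sub (x y : Fin 9 → ℤ) : bd (x - y) = bd x - bd y := by
  funext i
  fin_cases i <;>
    simp only [bd, Fin.zero_eta, Fin.mk_one, Fin.reduceFinMk, Fin.isValue, Pi.sub_apply,
      Matrix.cons_val_zero, Matrix.cons_val_one, Matrix.cons_val, Prod.mk_sub_mk] <;>
    ext <;> ring

/-- Zero boundary makes every hexagon entry the negative of an adjacent corner; the hexagon
relations then read `a₁ + b₁ = 2 c₁` cyclically, which forces the three corners to agree. -/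
theorem eq_smul_vtri_of_hex_of_bd_eq_zero {d : Fin 9 → ℤ} (hd : hex d) (hbd : bd d = 0) :
    d = d 0 • vtri := by
  obtain ⟨h₁, h₂, h₃⟩ := hd
  have hb₀ := congrFun hbd 0
  have hb₁ := congrFun hbd 1
  have hb₂ := congrFun hbd 2
  simp only [bd, Matrix.cons_val_zero, Matrix.cons_val_one, Matrix.cons_val_two, Matrix.head_cons,
    Matrix.tail_cons, Pi.zero_apply, Prod.ext_iff, Prod.fst_zero, Prod.snd_zero] at hb₀ hb₁ hb₂
  funext i
  fin_cases i <;>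
    simp only [vtri, Fin.zero_eta, Fin.mk_one, Fin.reduceFinMk, Fin.isValue, Int.reduceNeg,
      Pi.smul_apply, Matrix.cons_val_zero, Matrix.cons_val_one, Matrix.cons_val, Int.zsmul_eq_mul,
      mul_neg, mul_one] <;>
    omega

theorem stmt_1 (Q Q' : Fin 9 → ℤ) (hQ : isBZ Q) (hQ' : isBZ Q')
    (h : bd Q = bd Q') : ∃ ℓ : ℤ, Q' - Q = ℓ • vtri :=
  ⟨_, eq_smul_vtri_of_hex_of_bd_eq_zero (hex_sub hQ'.2 hQ.2) (by rw [bd_sub, h, sub_self])⟩
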